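/- arXiv:1502.06114 — 5 statements merged into one kernel-verified Lean document; each statement's English description precedes it below -/
import Mathlib

section
/- Let S = {i ∈ ℤ : i ≡ 1 or 4 (mod 5)} and S' = {i ∈ ℤ : i ≡ 2 or 3 (mod 5)}. There is no group automorphism α of ℤ with α(S) = S', even though Cay(ℤ, S) ≅ Cay(ℤ, S'). Hence Cay(ℤ, S) is not a CI-graph and ℤ is not a CI-group. -/
/-- The Cayley graph of an additive group `A` with connection set `S`. -/
def cayAdd (A : Type*) [AddGroup A] (S : Set A) : SimpleGraph A where
  Adj x y := x ≠ y ∧ y - x ∈ S ∧ x - y ∈ S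
  symm := ⟨fun _ _ ⟨h1, h2, h3⟩ => ⟨h1.symm, h3, h2⟩⟩
  loopless := ⟨fun _ ⟨h, _⟩ => h rfl⟩

/-- S = {i : i ≡ 1 or 4 (mod 5)} -/
def S14 : Set ℤ := {i : ℤ | i % 5 = 1 ∨ i % 5 = 4}

/-- S' = {i : i ≡ 2 or 3 (mod 5)} -/
def S23 : Set ℤ := {i : ℤ | i % 5 = 2 ∨ i % 5 = 3}

/-!
Adjacency in both graphs depends only on the residues mod 5, and the bijection
`5q + r ↦ 5q + 2r` (`0 ≤ r < 5`) of ℤ multiplies every difference by 2 mod 5, which maps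
`{±1}` onto `{±2}`; hence the graphs are isomorphic. On the other hand the only automorphisms
of ℤ are `±id`, and both fix `S`, which differs from `S'`.
-/

def cayAddIsoOfSubMemIff {A B : Type*} [AddGroup A] [AddGroup B] {S : Set A} {T : Set B}
    (e : A ≃ B) (he : ∀ x y, e y - e x ∈ T ↔ y - x ∈ S) : cayAdd A S ≃g cayAdd B T where
  toEquiv := e
  map_rel_iff' {x y} := by
    simp only [cayAdd, ne_eq, e.apply_eq_iff_eq, he]

def doubleModFive : ℤ ≃ ℤ where
  toFun x := x + x % 5
  invFun n := n - 3 * n % 5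
  left_inv x := by change (x + x % 5) - 3 * (x + x % 5) % 5 = x; omega
  right_inv n := by change (n - 3 * n % 5) + (n - 3 * n % 5) % 5 = n; omega

lemma doubleModFive_sub_mem_S23_iff (x y : ℤ) :
    doubleModFive y - doubleModFive x ∈ S23 ↔ y - x ∈ S14 := by
  change (y + y % 5) - (x + x % 5) ∈ S23 ↔ _
  simp only [S14, S23, Set.mem_ofPred_eq]
  omega

lemma neg_S14 : -S14 = S14 := by
  ext i
  simp only [S14, Set.mem_neg, Set.mem_ofPred_eq]
  omega

lemma addEquiv_image_S14 (α : ℤ ≃+ ℤ) : α '' S14 = S14 := by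
  rcases Int.addEquiv_eq_refl_or_neg α with rfl | rfl
  · exact Set.image_id S14
  · exact (Set.image_neg_eq_neg).trans neg_S14

lemma S14_ne_S23 : S14 ≠ S23 := fun h => by
  have : (1 : ℤ) ∈ S23 := h ▸ Or.inl rfl
  simp [S23] at this

/-- Cay(ℤ, S) ≅ Cay(ℤ, S'), but no automorphism of ℤ carries S to S';
hence Cay(ℤ, S) is not a CI-graph and ℤ is not a CI-group. -/
theorem stmt_2 :
    Nonempty (cayAdd ℤ S14 ≃g cayAdd ℤ S23) ∧
      ¬ ∃ α : ℤ ≃+ ℤ, α '' S14 = S23 :=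
  ⟨⟨cayAddIsoOfSubMemIff doubleModFive doubleModFive_sub_mem_S23_iff⟩,
    fun ⟨α, hα⟩ => S14_ne_S23 ((addEquiv_image_S14 α).symm.trans hα)⟩
end

section
/- No infinite abelian group all of whose elements have finite order, with all p-subgroups finite and with nontrivial p-subgroups for infinitely many primes p, can have the property that every two subgroups of equal order and equal index are isomorphic. Specifically, in such a group G one can find subgroups H₁ ≤ H₂ with H₂ = ⟨H₁, x⟩ for an element x of prime order p, H₁ containing no element of order p, |H₁| = |H₂| infinite, and |G : H₁| = |G : H₂| infinite, so H₁ ≇ H₂. -/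
/-!
Remove one prime `p` of the infinite set of prime orders and split the remaining primes into two
infinite sets `A` and `B`. Let `H₁` be the subgroup of `A`-elements and `H₂ = H₁ ⊔ ⟨x⟩` for an
element `x` of order `p`. Elements of order `q ∈ A` make `H₁` infinite, those of order `q ∈ B`
survive in `G ⧸ H₁` and make it infinite; since `H₁` has finite index in `H₂`, the two subgroups
have the same order and the same index. But `H₂` contains an element of order `p` and `H₁` does
not.
-/

open Cardinal Subgroup

universe u

theorem Set.Infinite.exists_disjoint_infinite_subsets {α : Type*} {s : Set α} (hs : s.Infinite) :
    ∃ t u : Set α, t ⊆ s ∧ u ⊆ s ∧ Disjoint t u ∧ t.Infinite ∧ u.Infinite := by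
  obtain ⟨t, u, htu, hdisj, hcard⟩ := hs.exists_union_disjoint_cardinal_eq_of_infinite
  have ht : t.Infinite := fun ht ↦ hs <| htu ▸ ht.union
    (lt_aleph0_iff_set_finite.mp (hcard ▸ lt_aleph0_iff_set_finite.mpr ht))
  refine ⟨t, u, htu ▸ Set.subset_union_left, htu ▸ Set.subset_union_right, hdisj, ht, ?_⟩
  exact fun hu ↦ ht (lt_aleph0_iff_set_finite.mp (hcard ▸ lt_aleph0_iff_set_finite.mpr hu))

theorem Cardinal.mk_eq_of_equiv_prod_finite {α β γ : Type u} [Infinite α] [Finite γ]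
    (e : α ≃ β × γ) : #α = #β := by
  have : Nonempty γ := ⟨(e (Classical.arbitrary α)).2⟩
  have : Infinite β := by
    have := e.infinite_iff.mp ‹_›
    rw [infinite_prod] at this
    exact this.elim And.left fun h ↦ absurd h.2 (not_infinite_iff_finite.mpr ‹_›)
  rw [mk_congr e, mk_prod, lift_id, lift_id,
    mul_eq_left (aleph0_le_mk β) ((lt_aleph0_of_finite γ).le.trans (aleph0_le_mk β))
      (mk_ne_zero γ)]

theorem infinite_of_forall_exists_orderOf_eq {M : Type*} [Monoid M] {T : Set ℕ} (hT : T.Infinite)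
    (h : ∀ q ∈ T, ∃ g : M, orderOf g = q) : Infinite M := by
  by_contra hM
  have := not_infinite_iff_finite.mp hM
  exact hT ((Set.finite_range (orderOf : M → ℕ)).subset fun q hq ↦ h q hq)

theorem QuotientGroup.orderOf_mk_eq_of_prime {G : Type*} [Group G] {N : Subgroup G} [N.Normal]
    {g : G} (hg : (orderOf g).Prime) (hgN : g ∉ N) : orderOf (g : G ⧸ N) = orderOf g := by
  refine ((Nat.dvd_prime hg).mp (orderOf_map_dvd (QuotientGroup.mk' N) g)).resolve_left ?_
  rw [orderOf_eq_one_iff]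
  exact fun h ↦ hgN ((QuotientGroup.eq_one_iff g).mp h)

namespace Subgroup

variable {G : Type*} [Group G] {s t : Subgroup G}

theorem mk_eq_mk_of_le [Infinite s] (hst : s ≤ t) [s.IsFiniteRelIndex t] : #s = #t := by
  have : Infinite t := Infinite.of_injective _ (inclusion_injective hst)
  rw [mk_eq_of_equiv_prod_finite ((groupEquivQuotientProdSubgroup (s := s.subgroupOf t)).trans
    (Equiv.prodComm _ _)), mk_congr (subgroupOfEquivOfLe hst).toEquiv]

theorem mk_quotient_eq_mk_quotient_of_le [Infinite (G ⧸ s)] (hst : s ≤ t)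
    [s.IsFiniteRelIndex t] : #(G ⧸ s) = #(G ⧸ t) :=
  mk_eq_of_equiv_prod_finite (quotientEquivProdOfLE hst)

theorem isFiniteRelIndex_sup_zpowers {G : Type*} [CommGroup G] (s : Subgroup G) {x : G}
    (hx : IsOfFinOrder x) : s.IsFiniteRelIndex (s ⊔ zpowers x) := by
  have : Finite (zpowers x) := hx.finite_zpowers.to_subtype
  exact ⟨by rw [relIndex_sup_left]; exact index_ne_zero_of_finite⟩

theorem not_nonempty_mulEquiv_of_forall_orderOf_ne {x : G} (hx : x ∈ t)
    (hs : ∀ h ∈ s, orderOf h ≠ orderOf x) : ¬ Nonempty (s ≃* t) := by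
  rintro ⟨e⟩
  refine hs _ (e.symm ⟨x, hx⟩).2 ?_
  rw [orderOf_coe, MulEquiv.orderOf_eq, orderOf_mk]

end Subgroup

namespace CommGroup

variable (G : Type*) [CommGroup G]

def piComponent (π : Set ℕ) : Subgroup G where
  carrier := {g | IsOfFinOrder g ∧ ∀ q : ℕ, q.Prime → q ∣ orderOf g → q ∈ π}
  one_mem' := ⟨IsOfFinOrder.one, fun q hq hdvd ↦
    absurd (Nat.dvd_one.mp (orderOf_one (G := G) ▸ hdvd)) hq.ne_one⟩
  mul_mem' := fun {a b} ⟨ha, ha'⟩ ⟨hb, hb'⟩ ↦ ⟨ha.mul hb, fun q hq hdvd ↦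
    (hq.dvd_mul.mp (hdvd.trans ((Commute.all a b).orderOf_mul_dvd_lcm.trans
      (Nat.lcm_dvd_mul _ _)))).elim (ha' q hq) (hb' q hq)⟩
  inv_mem' := fun {a} ⟨ha, ha'⟩ ↦ ⟨ha.inv, by simpa only [orderOf_inv] using ha'⟩

variable {G}

theorem mem_piComponent_of_orderOf_eq_prime {π : Set ℕ} {g : G} {q : ℕ} (hq : q.Prime)
    (hg : orderOf g = q) : g ∈ piComponent G π ↔ q ∈ π := by
  have hfin : IsOfFinOrder g := orderOf_pos_iff.mp (hg ▸ hq.pos)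
  refine ⟨fun h ↦ h.2 q hq (hg ▸ dvd_rfl), fun h ↦ ⟨hfin, fun r hr hdvd ↦ ?_⟩⟩
  rwa [(Nat.prime_dvd_prime_iff_eq hr hq).mp (hg ▸ hdvd)]

end CommGroup

open CommGroup in
theorem stmt_8_general (G : Type*) [CommGroup G]
    (hinf : {p : ℕ | p.Prime ∧ ∃ g : G, orderOf g = p ∧ g ≠ 1}.Infinite) :
    ∃ (p : ℕ) (_ : p.Prime) (H₁ H₂ : Subgroup G) (x : G),
      orderOf x = p ∧
      H₁ ≤ H₂ ∧
      H₂ = H₁ ⊔ Subgroup.zpowers x ∧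
      (∀ h ∈ H₁, orderOf h ≠ p) ∧
      Infinite H₁ ∧
      Cardinal.mk H₁ = Cardinal.mk H₂ ∧
      Infinite (G ⧸ H₁) ∧
      Cardinal.mk (G ⧸ H₁) = Cardinal.mk (G ⧸ H₂) ∧
      ¬ Nonempty (H₁ ≃* H₂) := by
  obtain ⟨p, hp, x, hx, -⟩ := hinf.nonempty
  obtain ⟨A, B, hA, hB, hAB, hAinf, hBinf⟩ :=
    (hinf.sdiff (Set.finite_singleton p)).exists_disjoint_infinite_subsets
  set H₁ := piComponent G A
  have hnoP : ∀ h ∈ H₁, orderOf h ≠ p := fun h hh hhp ↦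
    (hA ((mem_piComponent_of_orderOf_eq_prime hp hhp).mp hh)).2 rfl
  have hH₁ : Infinite H₁ := infinite_of_forall_exists_orderOf_eq hAinf fun q hqA ↦ by
    obtain ⟨hq, g, hg, -⟩ := (hA hqA).1
    exact ⟨⟨g, (mem_piComponent_of_orderOf_eq_prime hq hg).mpr hqA⟩, by rw [orderOf_mk, hg]⟩
  have hGH₁ : Infinite (G ⧸ H₁) := infinite_of_forall_exists_orderOf_eq hBinf fun q hqB ↦ by
    obtain ⟨hq, g, hg, -⟩ := (hB hqB).1
    have hgH₁ : g ∉ H₁ := fun h ↦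
      hAB.notMem_of_mem_right hqB ((mem_piComponent_of_orderOf_eq_prime hq hg).mp h)
    exact ⟨g, by rw [QuotientGroup.orderOf_mk_eq_of_prime (hg ▸ hq) hgH₁, hg]⟩
  have := H₁.isFiniteRelIndex_sup_zpowers (orderOf_pos_iff.mp (hx ▸ hp.pos))
  exact ⟨p, hp, H₁, _, x, hx, le_sup_left, rfl, hnoP, hH₁, mk_eq_mk_of_le le_sup_left, hGH₁,
    mk_quotient_eq_mk_quotient_of_le le_sup_left,
    not_nonempty_mulEquiv_of_forall_orderOf_ne (mem_sup_right (mem_zpowers x)) (hx ▸ hnoP)⟩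

/-- In an infinite abelian torsion group with all p-subgroups finite and nontrivial
p-subgroups for infinitely many primes, there are subgroups H₁ ≤ H₂ = ⟨H₁, x⟩ with x of
prime order p, H₁ having no element of order p, of equal (infinite) order and equal
(infinite) index, yet non-isomorphic.  In particular such a group does not have the
property that any two subgroups of equal order and index are isomorphic. -/
theorem stmt_8 (G : Type*) [CommGroup G] [Infinite G]
    (htor : ∀ g : G, IsOfFinOrder g)
    (hpfin : ∀ p : ℕ, p.Prime → ∀ P : Subgroup G, IsPGroup p P → Finite P)
    (hinf : {p : ℕ | p.Prime ∧ ∃ g : G, orderOf g = p ∧ g ≠ 1}.Infinite) :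
    ∃ (p : ℕ) (_ : p.Prime) (H₁ H₂ : Subgroup G) (x : G),
      orderOf x = p ∧
      H₁ ≤ H₂ ∧
      H₂ = H₁ ⊔ Subgroup.zpowers x ∧
      (∀ h ∈ H₁, orderOf h ≠ p) ∧
      Infinite H₁ ∧
      Cardinal.mk H₁ = Cardinal.mk H₂ ∧
      Infinite (G ⧸ H₁) ∧
      Cardinal.mk (G ⧸ H₁) = Cardinal.mk (G ⧸ H₂) ∧
      ¬ Nonempty (H₁ ≃* H₂) :=
  stmt_8_general G hinf
end

section
/- If S is a finite inverse-closed generating set of ℤⁿ, then Cay(ℤⁿ, S) is a normal Cayley graph: the group of translations ℤⁿ is a normal subgroup of Aut(Cay(ℤⁿ, S)). -/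
namespace CayNormal

variable {n : ℕ} (S : Set (Fin n → ℤ))

abbrev Auto := cayAdd (Fin n → ℤ) S ≃g cayAdd (Fin n → ℤ) S

variable {S}

/-- translations are automorphisms -/
def transAuto (v : Fin n → ℤ) : Auto S where
  toEquiv := Equiv.addRight v
  map_rel_iff' := by
    intro a b
    show (a + v ≠ b + v ∧ (b + v) - (a + v) ∈ S ∧ (a + v) - (b + v) ∈ S) ↔ (a ≠ b ∧ b - a ∈ S ∧ a - b ∈ S)
    constructor
    · rintro ⟨h1, h2, h3⟩
      refine ⟨fun h => h1 (by rw [h]), ?_, ?_⟩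
      · simpa [add_sub_add_right_eq_sub] using h2
      · simpa [add_sub_add_right_eq_sub] using h3
    · rintro ⟨h1, h2, h3⟩
      refine ⟨fun h => h1 (add_right_cancel h), ?_, ?_⟩
      · simpa [add_sub_add_right_eq_sub] using h2
      · simpa [add_sub_add_right_eq_sub] using h3

@[simp] lemma transAuto_apply (v x : Fin n → ℤ) : transAuto (S := S) v x = x + v := rfl

lemma step_mem (hsym : -S = S) (φ : Auto S) (x s : Fin n → ℤ) (hs : s ∈ S) (h0 : s ≠ 0) :
    φ (x + s) - φ x ∈ S ∧ φ (x + s) - φ x ≠ 0 := by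
  have hneg : -s ∈ S := by rw [← hsym]; exact Set.neg_mem_neg.mpr hs
  have hadj : (cayAdd _ S).Adj x (x + s) := by
    show x ≠ x + s ∧ (x + s) - x ∈ S ∧ x - (x + s) ∈ S
    refine ⟨fun h => h0 ?_, by simpa using hs, by simpa [neg_sub] using hneg⟩
    · have := congrArg (fun z => z - x) h
      simpa using this.symm
  have hadj2 : φ x ≠ φ (x + s) ∧ φ (x + s) - φ x ∈ S ∧ φ x - φ (x + s) ∈ S := φ.map_adj_iff.mpr hadj
  exact ⟨hadj2.2.1, sub_ne_zero.mpr (Ne.symm hadj2.1)⟩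

/-- Rigid directions: all automorphisms act on them by a uniform shift. -/
def Rig (S : Set (Fin n → ℤ)) (v : Fin n → ℤ) : Prop :=
  ∀ (φ : Auto S) (x : Fin n → ℤ), φ (x + v) = φ x + (φ v - φ 0)

lemma rig_zero : Rig S 0 := fun φ x => by simp

lemma rig_add {v w : Fin n → ℤ} (hv : Rig S v) (hw : Rig S w) : Rig S (v + w) := by
  intro φ x
  have h1 : φ (x + (v + w)) = φ x + (φ v - φ 0) + (φ w - φ 0) := by
    rw [← add_assoc, hw φ (x + v), hv φ x]
  have h2 : φ (v + w) = φ v + (φ w - φ 0) := by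
    have := hw φ v; rwa [] at this
  rw [h1, h2]; abel

lemma rig_neg {v : Fin n → ℤ} (hv : Rig S v) : Rig S (-v) := by
  intro φ x
  have h1 : φ ((x + -v) + v) = φ (x + -v) + (φ v - φ 0) := hv φ _
  rw [neg_add_cancel_right] at h1
  have h2 : φ (-v + v) = φ (-v) + (φ v - φ 0) := hv φ _
  rw [neg_add_cancel] at h2
  have e1 : φ (x + -v) = φ x - (φ v - φ 0) := eq_sub_of_add_eq h1.symm
  have e2 : φ (-v) = φ 0 - (φ v - φ 0) := eq_sub_of_add_eq h2.symm
  rw [e1, e2]; abel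

lemma rig_nsmul {v : Fin n → ℤ} (hv : Rig S v) : ∀ m : ℕ, Rig S (m • v)
  | 0 => by simpa using rig_zero
  | (m+1) => by
      have h := rig_add (rig_nsmul hv m) hv
      rw [succ_nsmul]
      exact h

lemma rig_line {s : Fin n → ℤ} (hs : Rig S s) (φ : Auto S) (z : Fin n → ℤ) :
    ∀ m : ℕ, φ (z + m • s) = φ z + m • (φ s - φ 0)
  | 0 => by simp
  | (m+1) => by
      have h1 : φ (z + (m+1) • s) = φ (z + m • s) + (φ s - φ 0) := by
        rw [succ_nsmul, ← add_assoc]; exact hs φ _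
      rw [h1, rig_line hs φ z m, succ_nsmul]; abel

/-- absorption: if the value of some automorphism difference is rigid, so is the argument -/
lemma rig_absorb {w u : Fin n → ℤ} (hw : Rig S w) (φ : Auto S) (x₀ : Fin n → ℤ)
    (he : φ (x₀ + u) - φ x₀ = w) : Rig S u := by
  -- step 1 : φ.symm (z + w) = φ.symm z + u for all z
  have hc : φ.symm w - φ.symm 0 = u := by
    have h1 := hw φ.symm (φ x₀)
    have h2 : φ x₀ + w = φ (x₀ + u) := by rw [← he]; abel
    rw [h2] at h1
    rw [RelIso.symm_apply_apply, RelIso.symm_apply_apply] at h1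
    exact (add_left_cancel (a := x₀) h1).symm
  have hstep : ∀ z, φ.symm (z + w) = φ.symm z + u := by
    intro z; rw [hw φ.symm z, hc]
  intro ψ x
  have hx : x + u = φ.symm (φ x + w) := by
    rw [hstep (φ x), RelIso.symm_apply_apply]
  set β : Auto S := φ.symm.trans ψ with hβ
  have happ : ∀ z, β z = ψ (φ.symm z) := fun z => rfl
  have h2 := hw β (φ x)
  have h20 := hw β (φ 0)
  have e1 : ψ (x + u) = ψ x + (β w - β 0) := by
    have hb : β (φ x) = ψ x := by rw [happ, RelIso.symm_apply_apply]
    rw [hx, ← happ, h2, hb]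
  have e0 : ψ (0 + u) = ψ 0 + (β w - β 0) := by
    have hx0 : (0 : Fin n → ℤ) + u = φ.symm (φ 0 + w) := by
      rw [hstep (φ 0), RelIso.symm_apply_apply]
    have hb : β (φ 0) = ψ 0 := by rw [happ, RelIso.symm_apply_apply]
    rw [hx0, ← happ, h20, hb]
  rw [e1]
  have : ψ u = ψ 0 + (β w - β 0) := by rw [← e0, zero_add]
  rw [this]; abel

end CayNormal
namespace CayNormal

variable {n : ℕ} {S : Set (Fin n → ℤ)}

/-- reachable by exactly m nonzero steps from S -/
def Reach (S : Set (Fin n → ℤ)) (m : ℕ) (v : Fin n → ℤ) : Prop :=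
  ∃ l : List (Fin n → ℤ), (∀ a ∈ l, a ∈ S ∧ a ≠ 0) ∧ l.length = m ∧ l.sum = v

lemma exists_reach (hsym : -S = S) (hgen : AddSubgroup.closure S = ⊤)
    (v : Fin n → ℤ) : ∃ m, Reach S m v := by
  have hv : v ∈ AddSubgroup.closure S := by rw [hgen]; trivial
  induction hv using AddSubgroup.closure_induction with
  | mem s hs =>
      by_cases h0 : s = 0
      · exact ⟨0, [], by simp, by simp, by simp [h0]⟩
      · exact ⟨1, [s], by simp [hs, h0], by simp, by simp⟩
  | zero => exact ⟨0, [], by simp, by simp, by simp⟩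
  | add a b _ _ iha ihb =>
      obtain ⟨m1, l1, h1, hl1, hs1⟩ := iha
      obtain ⟨m2, l2, h2, hl2, hs2⟩ := ihb
      exact ⟨m1 + m2, l1 ++ l2, by
        intro t ht; rcases List.mem_append.mp ht with h | h
        exacts [h1 t h, h2 t h], by simp [hl1, hl2], by simp [hs1, hs2]⟩
  | neg a _ iha =>
      obtain ⟨m, l, h1, hl, hs⟩ := iha
      refine ⟨m, l.map (fun t => -t), ?_, by simp [hl], ?_⟩
      · intro t ht
        obtain ⟨b, hb, rfl⟩ := List.mem_map.mp ht
        refine ⟨by rw [← hsym]; exact Set.neg_mem_neg.mpr (h1 b hb).1, ?_⟩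
        simpa using (h1 b hb).2
      · have : ∀ l' : List (Fin n → ℤ), (l'.map (fun t => -t)).sum = -l'.sum := by
          intro l'; induction l' with
          | nil => simp
          | cons a t ih => simp [ih]; abel
        rw [this, hs]

lemma reach_map (hsym : -S = S) (φ : Auto S) :
    ∀ (l : List (Fin n → ℤ)), (∀ a ∈ l, a ∈ S ∧ a ≠ 0) → ∀ x : Fin n → ℤ,
      ∃ l' : List (Fin n → ℤ), (∀ a ∈ l', a ∈ S ∧ a ≠ 0) ∧ l'.length = l.length ∧
        l'.sum = φ (x + l.sum) - φ x := by
  intro l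
  induction l with
  | nil => intro _ x; exact ⟨[], by simp, by simp, by simp⟩
  | cons a t ih =>
      intro h x
      obtain ⟨l'', h1, h2, h3⟩ := ih (fun b hb => h b (List.mem_cons_of_mem a hb)) (x + a)
      refine ⟨(φ (x + a) - φ x) :: l'', ?_, by simp [h2], ?_⟩
      · intro b hb
        rcases List.mem_cons.mp hb with rfl | hb
        · exact step_mem hsym φ x a (h a (List.mem_cons_self)).1 (h a (List.mem_cons_self)).2
        · exact h1 b hb
      · have hx : x + (a :: t).sum = (x + a) + t.sum := by
          simp [List.sum_cons]; abel
        rw [List.sum_cons, h3, hx]; abel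

lemma reach_map' (hsym : -S = S) (φ : Auto S) {m : ℕ} {u : Fin n → ℤ}
    (h : Reach S m u) (x : Fin n → ℤ) : Reach S m (φ (x + u) - φ x) := by
  obtain ⟨l, h1, h2, h3⟩ := h
  obtain ⟨l', h1', h2', h3'⟩ := reach_map hsym φ l h1 x
  exact ⟨l', h1', by rw [h2', h2], by rw [h3', h3]⟩

lemma reach_bound {B₀ : ℤ} (hB : ∀ a ∈ S, ∀ i, |a i| ≤ B₀) {m : ℕ} {v : Fin n → ℤ}
    (h : Reach S m v) : ∀ i, |v i| ≤ (m : ℤ) * B₀ := by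
  obtain ⟨l, h1, h2, h3⟩ := h
  subst h2 h3
  induction l with
  | nil => simp
  | cons a t ih =>
      intro i
      have ha := hB a (h1 a (List.mem_cons_self)).1 i
      have ht := ih (fun b hb => h1 b (List.mem_cons_of_mem a hb)) i
      have : (a :: t).sum i = a i + t.sum i := by simp
      rw [this]
      calc |a i + t.sum i| ≤ |a i| + |t.sum i| := abs_add_le _ _
        _ ≤ B₀ + (t.length : ℤ) * B₀ := add_le_add ha ht
        _ = ((t.length : ℤ) + 1) * B₀ := by ring
        _ = ((a :: t).length : ℤ) * B₀ := by simp [add_comm]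

/-- a uniform coordinate bound for the finite set S -/
lemma exists_bound (hfin : S.Finite) : ∃ B₀ : ℤ, 0 ≤ B₀ ∧ ∀ a ∈ S, ∀ i, |a i| ≤ B₀ := by
  classical
  refine ⟨(hfin.toFinset.sup fun a => Finset.univ.sup fun i => (a i).natAbs : ℕ), by positivity, ?_⟩
  intro a ha i
  have h1 : (a i).natAbs ≤ Finset.univ.sup fun i => (a i).natAbs :=
    Finset.le_sup (f := fun i => (a i).natAbs) (Finset.mem_univ i)
  have h2 : (Finset.univ.sup fun i => (a i).natAbs) ≤
      hfin.toFinset.sup fun a => Finset.univ.sup fun i => (a i).natAbs :=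
    Finset.le_sup (f := fun a => Finset.univ.sup fun i => (a i).natAbs) (hfin.mem_toFinset.mpr ha)
  have := h1.trans h2
  rw [Int.abs_eq_natAbs]
  exact_mod_cast this

end CayNormal
namespace CayNormal

variable {n : ℕ}

def mu (c v : Fin n → ℤ) : ℤ := ∑ i, c i * v i

lemma mu_add (c v w : Fin n → ℤ) : mu c (v + w) = mu c v + mu c w := by
  simp [mu, mul_add, Finset.sum_add_distrib]

lemma mu_sub (c v w : Fin n → ℤ) : mu c (v - w) = mu c v - mu c w := by
  simp [mu, mul_sub, Finset.sum_sub_distrib]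

lemma mu_neg (c v : Fin n → ℤ) : mu c (-v) = -mu c v := by
  simp [mu, Finset.sum_neg_distrib]

lemma mu_nsmul (c v : Fin n → ℤ) (m : ℕ) : mu c (m • v) = (m : ℤ) * mu c v := by
  simp only [mu, Finset.mul_sum]
  refine Finset.sum_congr rfl fun i _ => ?_
  have : (m • v) i = (m : ℤ) * v i := by
    simp [Pi.smul_apply, nsmul_eq_mul]
  rw [this]; ring

lemma mu_bound (c : Fin n → ℤ) (hc : ∀ i, 0 ≤ c i) {y : Fin n → ℤ} {K : ℤ}
    (hy : ∀ i, |y i| ≤ K) : |mu c y| ≤ (∑ i, c i) * K := by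
  calc |mu c y| ≤ ∑ i, |c i * y i| := Finset.abs_sum_le_sum_abs _ _
    _ ≤ ∑ i, c i * K := by
        refine Finset.sum_le_sum fun i _ => ?_
        rw [abs_mul, abs_of_nonneg (hc i)]
        exact mul_le_mul_of_nonneg_left (hy i) (hc i)
    _ = (∑ i, c i) * K := by rw [Finset.sum_mul]

lemma baseB {B : ℤ} (hB : 1 ≤ B) :
    ∀ (N : ℕ) (b : ℕ → ℤ), (∀ i, |b i| ≤ B - 1) →
      (∑ i ∈ Finset.range N, B ^ i * b i) = 0 → ∀ i < N, b i = 0 := by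
  intro N
  induction N with
  | zero => intro b _ _ i hi; omega
  | succ N ih =>
      intro b hb h i hi
      have hsum : (∑ i ∈ Finset.range N, B ^ i * b i) + B ^ N * b N = 0 := by
        rw [← Finset.sum_range_succ]; exact h
      have hbound : |∑ i ∈ Finset.range N, B ^ i * b i| ≤ B ^ N - 1 := by
        calc |∑ i ∈ Finset.range N, B ^ i * b i| ≤ ∑ i ∈ Finset.range N, |B ^ i * b i| :=
              Finset.abs_sum_le_sum_abs _ _
          _ ≤ ∑ i ∈ Finset.range N, B ^ i * (B - 1) := by
              refine Finset.sum_le_sum fun j _ => ?_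
              rw [abs_mul, abs_of_nonneg (pow_nonneg (by omega) j)]
              exact mul_le_mul_of_nonneg_left (hb j) (pow_nonneg (by omega) j)
          _ = (∑ i ∈ Finset.range N, B ^ i) * (B - 1) := by rw [Finset.sum_mul]
          _ = B ^ N - 1 := geom_sum_mul B N
      have hBN : (0 : ℤ) < B ^ N := pow_pos (by omega) N
      have hbN : b N = 0 := by
        by_contra hne
        have h1 : 1 ≤ |b N| := by rcases abs_cases (b N) with ⟨h,_⟩ | ⟨h,_⟩ <;> omega
        have h2 : B ^ N ≤ B ^ N * |b N| := le_mul_of_one_le_right (le_of_lt hBN) h1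
        have h3 : |B ^ N * b N| = B ^ N * |b N| := by
          rw [abs_mul, abs_of_nonneg (le_of_lt hBN)]
        have h4 : B ^ N * b N = -(∑ i ∈ Finset.range N, B ^ i * b i) := by omega
        have h5 : |B ^ N * b N| ≤ B ^ N - 1 := by rw [h4, abs_neg]; exact hbound
        rw [h3] at h5
        linarith
      rcases Nat.lt_succ_iff_lt_or_eq.mp hi with hlt | rfl
      · refine ih b hb ?_ i hlt
        rw [hbN, mul_zero, add_zero] at hsum; exact hsum
      · exact hbN

lemma mu_inj {C : ℤ} (hC : 0 ≤ C) {v w : Fin n → ℤ}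
    (hv : ∀ i, |v i| ≤ C) (hw : ∀ i, |w i| ≤ C)
    (h : mu (fun i => (2 * C + 1) ^ (i : ℕ)) v = mu (fun i => (2 * C + 1) ^ (i : ℕ)) w) :
    v = w := by
  set B : ℤ := 2 * C + 1 with hBdef
  have hB : 1 ≤ B := by omega
  set b : ℕ → ℤ := fun i => if hi : i < n then v ⟨i, hi⟩ - w ⟨i, hi⟩ else 0 with hbdef
  have hb : ∀ i, |b i| ≤ B - 1 := by
    intro i
    by_cases hi : i < n
    · simp only [hbdef, dif_pos hi]
      have := hv ⟨i, hi⟩; have := hw ⟨i, hi⟩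
      have habs := abs_sub (v ⟨i, hi⟩) (w ⟨i, hi⟩)
      omega
    · simp [hbdef, dif_neg hi]; omega
  have hsum : (∑ i ∈ Finset.range n, B ^ i * b i) = 0 := by
    have e1 : ∑ i : Fin n, B ^ (i : ℕ) * b (i : ℕ) = ∑ i ∈ Finset.range n, B ^ i * b i :=
      Fin.sum_univ_eq_sum_range (fun i => B ^ i * b i) n
    rw [← e1]
    have e2 : ∀ i : Fin n, b (i : ℕ) = v i - w i := by
      intro i; simp [hbdef, i.isLt]
    calc ∑ i : Fin n, B ^ (i : ℕ) * b (i : ℕ)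
        = ∑ i : Fin n, B ^ (i : ℕ) * (v i - w i) := by
          refine Finset.sum_congr rfl fun i _ => by rw [e2]
      _ = mu (fun i => B ^ (i : ℕ)) v - mu (fun i => B ^ (i : ℕ)) w := by
          rw [← mu_sub]; simp [mu, mul_sub]
      _ = 0 := by rw [h]; ring
  have hz := baseB hB n b hb hsum
  funext i
  have := hz (i : ℕ) i.isLt
  simp only [hbdef, dif_pos i.isLt] at this
  have : v ⟨(i : ℕ), i.isLt⟩ = w ⟨(i : ℕ), i.isLt⟩ := by omega
  simpa using this

end CayNormal
namespace CayNormal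

variable {n : ℕ} {S : Set (Fin n → ℤ)}

lemma rig_of_strict (hsym : -S = S) (hgen : AddSubgroup.closure S = ⊤)
    {B₀ : ℤ} (hB : ∀ a ∈ S, ∀ i, |a i| ≤ B₀)
    (R : Set (Fin n → ℤ))
    (hR : ∀ w ∈ R, ∀ (φ : Auto S) (x : Fin n → ℤ), φ (x + w) - φ x ∈ R)
    (c v : Fin n → ℤ) (hv : v ∈ R)
    (hmax : ∀ w ∈ R, w ≠ v → mu c w < mu c v) : Rig S v := by
  -- uniqueness of the midpoint
  have unique2 : ∀ x y : Fin n → ℤ, y - x ∈ R → (x + v + v) - y ∈ R → y = x + v := by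
    intro x y h1 h2
    by_cases hc1 : y - x = v
    · have := eq_add_of_sub_eq hc1
      rw [this]; abel
    · exfalso
      have ht2le : mu c ((x + v + v) - y) ≤ mu c v := by
        by_cases hc2 : (x + v + v) - y = v
        · rw [hc2]
        · exact le_of_lt (hmax _ h2 hc2)
      have h1lt : mu c (y - x) < mu c v := hmax _ h1 hc1
      have hsum : (y - x) + ((x + v + v) - y) = v + v := by abel
      have heq := congrArg (mu c) hsum
      rw [mu_add, mu_add] at heq
      linarith
  -- one-step constancy along the v-line
  have dstep : ∀ (φ : Auto S) (x : Fin n → ℤ),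
      φ (x + v + v) - φ (x + v) = φ (x + v) - φ x := by
    intro φ x
    have hw₂R : φ (x + v + v) - φ (x + v) ∈ R := hR v hv φ (x + v)
    have hdR : φ (x + v) - φ x ∈ R := hR v hv φ x
    set w₂ := φ (x + v + v) - φ (x + v) with hw₂
    set y₂ := φ.symm (φ x + w₂) with hy₂
    have claim1 : y₂ - x ∈ R := by
      have h3 := hR w₂ hw₂R φ.symm (φ x)
      rwa [RelIso.symm_apply_apply] at h3
    have hkey : φ x + w₂ + (φ (x + v) - φ x) = φ (x + v + v) := by
      rw [hw₂]; abel
    have claim2 : (x + v + v) - y₂ ∈ R := by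
      have h3 := hR _ hdR φ.symm (φ x + w₂)
      rw [hkey, RelIso.symm_apply_apply] at h3
      exact h3
    have hyv := unique2 x y₂ claim1 claim2
    have h5 : φ y₂ = φ x + w₂ := by rw [hy₂, RelIso.apply_symm_apply]
    rw [hyv] at h5
    rw [h5]; abel
  -- shifted constancy along the v-line
  have dshift : ∀ (φ : Auto S) (x : Fin n → ℤ) (m : ℕ),
      φ ((x + m • v) + v) - φ (x + m • v) = φ (x + v) - φ x := by
    intro φ x m
    induction m with
    | zero => simp
    | succ m ih =>
        have e : x + (m + 1) • v = (x + m • v) + v := by rw [succ_nsmul]; abel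
        rw [e]
        have := dstep φ (x + m • v)
        calc φ ((x + m • v) + v + v) - φ ((x + m • v) + v)
            = φ ((x + m • v) + v) - φ (x + m • v) := this
          _ = φ (x + v) - φ x := ih
  -- the line formula
  have lineL : ∀ (φ : Auto S) (x : Fin n → ℤ) (m : ℕ),
      φ (x + m • v) = φ x + m • (φ (x + v) - φ x) := by
    intro φ x m
    induction m with
    | zero => simp
    | succ m ih =>
        have e : x + (m + 1) • v = (x + m • v) + v := by rw [succ_nsmul]; abel
        rw [e]
        have h1 := dshift φ x m
        rw [sub_eq_iff_eq_add] at h1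
        rw [h1, ih, succ_nsmul]; abel
  -- parallel lines have the same direction
  have parallel : ∀ (φ : Auto S) (x y : Fin n → ℤ),
      φ (x + v) - φ x = φ (y + v) - φ y := by
    intro φ x y
    obtain ⟨mc, hr⟩ := exists_reach hsym hgen (y - x)
    set Δ := (φ (y + v) - φ y) - (φ (x + v) - φ x) with hΔ
    have key : ∀ (i : ℕ) (j : Fin n),
        |(φ y - φ x) j + (i : ℤ) * Δ j| ≤ (mc : ℤ) * B₀ := by
      intro i j
      have h1 : Reach S mc (φ ((x + i • v) + (y - x)) - φ (x + i • v)) :=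
        reach_map' hsym φ hr _
      have h2 : (x + i • v) + (y - x) = y + i • v := by abel
      rw [h2, lineL φ x i, lineL φ y i] at h1
      have h3 : φ y + i • (φ (y + v) - φ y) - (φ x + i • (φ (x + v) - φ x))
          = (φ y - φ x) + i • Δ := by rw [hΔ]; simp only [smul_sub]; abel
      rw [h3] at h1
      have h4 := reach_bound hB h1 j
      have h5 : ((φ y - φ x) + i • Δ) j = (φ y - φ x) j + (i : ℤ) * Δ j := by
        simp [Pi.add_apply, Pi.smul_apply, nsmul_eq_mul]
      rwa [h5] at h4
    have hΔ0 : Δ = 0 := by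
      funext j
      by_contra hne
      set a := (φ y - φ x) j with ha
      set K := (mc : ℤ) * B₀ with hK
      have hK0 : 0 ≤ K := le_trans (abs_nonneg _) (by simpa using key 0 j)
      set i : ℕ := (K + |a| + 1).toNat with hi
      have hiz : (i : ℤ) = K + |a| + 1 := Int.toNat_of_nonneg (by positivity)
      have hb := key i j
      have hd1 : 1 ≤ |Δ j| := by
        have : Δ j ≠ 0 := by simpa using hne
        rcases abs_cases (Δ j) with ⟨h, _⟩ | ⟨h, _⟩ <;> omega
      have habs1 : |(i : ℤ) * Δ j| ≤ K + |a| := by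
        calc |(i : ℤ) * Δ j| = |(a + (i : ℤ) * Δ j) + (-a)| := by ring_nf
          _ ≤ |a + (i : ℤ) * Δ j| + |(-a)| := abs_add_le _ _
          _ ≤ K + |a| := by rw [abs_neg]; exact add_le_add hb le_rfl
      have habs2 : (i : ℤ) ≤ |(i : ℤ) * Δ j| := by
        rw [abs_mul, abs_of_nonneg (by positivity : (0:ℤ) ≤ (i : ℤ))]
        exact le_mul_of_one_le_right (by positivity) hd1
      linarith
    have := sub_eq_zero.mp hΔ0
    exact this.symm
  -- conclude rigidity
  intro φ x
  have h := parallel φ x 0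
  rw [zero_add] at h
  rw [sub_eq_iff_eq_add] at h
  rw [h]; abel

end CayNormal
namespace CayNormal

variable {n : ℕ} {S : Set (Fin n → ℤ)}

lemma rig_all (hfin : S.Finite) (hsym : -S = S) (hgen : AddSubgroup.closure S = ⊤) :
    ∀ u₀ : Fin n → ℤ, Rig S u₀ := by
  intro u₀
  classical
  by_cases hS0 : ∃ s ∈ S, s ≠ (0 : Fin n → ℤ)
  swap
  · -- degenerate case : the group is trivial
    push_neg at hS0
    have hall : ∀ v : Fin n → ℤ, v = 0 := by
      intro v
      have hv : v ∈ AddSubgroup.closure S := by rw [hgen]; trivial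
      have hle : AddSubgroup.closure S ≤ ⊥ := by
        rw [AddSubgroup.closure_le]
        intro s hs
        simp [hS0 s hs]
      have := hle hv
      simpa using this
    intro φ x
    rw [hall x, hall u₀]
    simp
  obtain ⟨B₀, hB₀0, hB⟩ := exists_bound hfin
  obtain ⟨m₀, hm₀⟩ := exists_reach hsym hgen u₀
  set C : ℤ := (m₀ : ℤ) * B₀ + B₀ with hC
  have hC0 : 0 ≤ C := by positivity
  set c : Fin n → ℤ := fun i => (2 * C + 1) ^ (i : ℕ) with hc
  have hcpos : ∀ i, 0 ≤ c i := fun i => pow_nonneg (by omega) _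
  have hFb : ∀ y, Reach S m₀ y → ∀ i, |y i| ≤ C := by
    intro y hy i
    have := reach_bound hB hy i
    rw [hC]; linarith
  have hSb : ∀ t ∈ S, ∀ i, |t i| ≤ C := by
    intro t ht i
    have h1 := hB t ht i
    have h2 : 0 ≤ (m₀ : ℤ) * B₀ := by positivity
    rw [hC]; linarith
  -- choose the strict mu-maximizer of S \ {0}
  set Sf := hfin.toFinset.filter (fun t => t ≠ 0) with hSf
  have hSfne : Sf.Nonempty := by
    obtain ⟨s, hs, hs0⟩ := hS0
    exact ⟨s, by simp [hSf, hfin.mem_toFinset, hs, hs0]⟩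
  obtain ⟨sh, hshmem, hshmax⟩ := Finset.exists_max_image Sf (mu c) hSfne
  have hshS : sh ∈ S ∧ sh ≠ 0 := by
    simpa [hSf, hfin.mem_toFinset] using hshmem
  have hstrictS : ∀ t, t ∈ S → t ≠ 0 → t ≠ sh → mu c t < mu c sh := by
    intro t ht ht0 htne
    have hle := hshmax t (by simp [hSf, hfin.mem_toFinset, ht, ht0])
    rcases lt_or_eq_of_le hle with h | h
    · exact h
    · exact absurd (mu_inj hC0 (hSb t ht) (hSb sh hshS.1) h) htne
  -- sh is rigid
  have hrig_s : Rig S sh := by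
    refine rig_of_strict hsym hgen hB {t | t ∈ S ∧ t ≠ 0} ?_ c sh ⟨hshS.1, hshS.2⟩ ?_
    · rintro w hw φ x
      exact step_mem hsym φ x w hw.1 hw.2
    · rintro w hw hne
      exact hstrictS w hw.1 hw.2 hne
  -- bounds for mu on reachables
  set D : ℤ := (∑ i, c i) * C with hD
  have hD0 : 0 ≤ D := mul_nonneg (Finset.sum_nonneg fun i _ => hcpos i) hC0
  have hmuF : ∀ y : Fin n → ℤ, (∀ i, |y i| ≤ C) → |mu c y| ≤ D :=
    fun y hy => mu_bound c hcpos hy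
  set M : ℕ := (2 * D + 1).toNat with hM
  have hMz : (M : ℤ) = 2 * D + 1 := Int.toNat_of_nonneg (by linarith)
  set u : Fin n → ℤ := u₀ + M • sh with hu
  -- the orbit set of u
  set Orb : Set (Fin n → ℤ) :=
    {w | ∃ (φ : Auto S) (x : Fin n → ℤ), φ (x + u) - φ x = w} with hOrb
  have hdec : ∀ w ∈ Orb, ∃ y e, Reach S m₀ y ∧ e ∈ S ∧ e ≠ 0 ∧ w = y + M • e := by
    rintro w ⟨φ, x, rfl⟩
    refine ⟨φ (x + u₀) - φ x, φ sh - φ 0, reach_map' hsym φ hm₀ x, ?_, ?_, ?_⟩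
    · have h1 := step_mem hsym φ 0 sh hshS.1 hshS.2
      rw [zero_add] at h1
      exact h1.1
    · have h1 := step_mem hsym φ 0 sh hshS.1 hshS.2
      rw [zero_add] at h1
      exact h1.2
    · have e1 : x + u = (x + u₀) + M • sh := by rw [hu]; abel
      rw [e1, rig_line hrig_s φ (x + u₀) M]
      abel
  have hv0mem : u ∈ Orb := ⟨RelIso.refl _, 0, by simp⟩
  obtain ⟨mur, hru⟩ := exists_reach hsym hgen u
  have hOrbfin : Orb.Finite := by
    have hbox : ({z : Fin n → ℤ | ∀ i, |z i| ≤ (mur : ℤ) * B₀}).Finite := by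
      refine Set.Finite.subset (Set.Finite.pi
        (fun i => Set.finite_Icc (-((mur : ℤ) * B₀)) ((mur : ℤ) * B₀))) ?_
      intro z hz
      rw [Set.mem_pi]
      intro i _
      exact abs_le.mp (hz i)
    refine hbox.subset ?_
    rintro w ⟨φ, x, rfl⟩ i
    exact reach_bound hB (reach_map' hsym φ hru x) i
  obtain ⟨v', hv'mem, hv'max⟩ :=
    Set.Finite.exists_maximalFor (mu c) Orb hOrbfin ⟨u, hv0mem⟩
  have hmaxle : ∀ w ∈ Orb, mu c w ≤ mu c v' := by
    intro w hw
    by_contra hlt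
    push_neg at hlt
    have := hv'max (j := w) hw (le_of_lt hlt)
    omega
  -- the maximizer is strict
  have hclaim : ∀ z f, Reach S m₀ z → f ∈ S → f ≠ 0 →
      mu c u ≤ mu c z + (M : ℤ) * mu c f → f = sh := by
    intro z f hz hf hf0 hge
    by_contra hfne
    have h1 : mu c f < mu c sh := hstrictS f hf hf0 hfne
    have h1' : mu c f ≤ mu c sh - 1 := by omega
    have h2 : |mu c z| ≤ D := hmuF z (hFb z hz)
    have h3 : |mu c u₀| ≤ D := hmuF u₀ (hFb u₀ hm₀)
    have h4 : mu c u = mu c u₀ + (M : ℤ) * mu c sh := by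
      rw [hu, mu_add, mu_nsmul]
    have h5 : (M : ℤ) * mu c f ≤ (M : ℤ) * (mu c sh - 1) :=
      mul_le_mul_of_nonneg_left h1' (by omega)
    have habs2 := abs_le.mp h2
    have habs3 := abs_le.mp h3
    have : mu c z + (M : ℤ) * mu c f ≤ D + (M : ℤ) * mu c sh - (M : ℤ) := by linarith
    rw [hMz] at this
    linarith
  have hstrict : ∀ w ∈ Orb, w ≠ v' → mu c w < mu c v' := by
    intro w hw hne
    rcases lt_or_eq_of_le (hmaxle w hw) with h | heq
    · exact h
    · exfalso
      obtain ⟨y, e, hyr, heS, he0, hwe⟩ := hdec w hw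
      obtain ⟨y', e', hyr', heS', he0', hwe'⟩ := hdec v' hv'mem
      have hmuw : mu c w = mu c y + (M : ℤ) * mu c e := by
        rw [hwe, mu_add, mu_nsmul]
      have hmuv' : mu c v' = mu c y' + (M : ℤ) * mu c e' := by
        rw [hwe', mu_add, mu_nsmul]
      have hules : mu c u ≤ mu c v' := hmaxle u hv0mem
      have hesh : e = sh := hclaim y e hyr heS he0 (by rw [← hmuw, heq]; exact hules)
      have he'sh : e' = sh := hclaim y' e' hyr' heS' he0' (by rw [← hmuv']; exact hules)
      have hyy' : mu c y = mu c y' := by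
        rw [hesh] at hmuw
        rw [he'sh] at hmuv'
        rw [heq] at hmuw
        linarith
      have : y = y' := mu_inj hC0 (hFb y hyr) (hFb y' hyr') hyy'
      exact hne (by rw [hwe, hwe', this, hesh, he'sh])
  -- the orbit set is invariant
  have hOrbinv : ∀ w ∈ Orb, ∀ (φ : Auto S) (x : Fin n → ℤ), φ (x + w) - φ x ∈ Orb := by
    rintro w ⟨φ', x', rfl⟩ φ x
    refine ⟨(φ'.trans (transAuto (x - φ' x'))).trans φ, x', ?_⟩
    show φ (φ' (x' + u) + (x - φ' x')) - φ (φ' x' + (x - φ' x')) = _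
    have e1 : φ' (x' + u) + (x - φ' x') = x + (φ' (x' + u) - φ' x') := by abel
    have e2 : φ' x' + (x - φ' x') = x := by abel
    rw [e1, e2]
  -- conclude
  have hrigv' : Rig S v' := rig_of_strict hsym hgen hB Orb hOrbinv c v' hv'mem hstrict
  obtain ⟨φ₀, x₀, he₀⟩ := hv'mem
  have hrigu : Rig S u := rig_absorb hrigv' φ₀ x₀ he₀
  have hfinal : Rig S (u + -(M • sh)) := rig_add hrigu (rig_neg (rig_nsmul hrig_s M))
  have he : u + -(M • sh) = u₀ := by rw [hu]; abel
  rwa [he] at hfinal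

end CayNormal

/-- For a finite inverse-closed generating set S of ℤⁿ, Cay(ℤⁿ, S) is a normal Cayley
graph: the translations are automorphisms, and the translation subgroup is normal in
the full automorphism group, i.e. conjugating a translation by any graph automorphism
yields a translation. -/
theorem stmt_13 (n : ℕ) (S : Set (Fin n → ℤ)) (hfin : S.Finite) (hsym : -S = S)
    (hgen : AddSubgroup.closure S = ⊤) :
    (∀ v : Fin n → ℤ, ∃ t : cayAdd (Fin n → ℤ) S ≃g cayAdd (Fin n → ℤ) S,
        ∀ x, t x = x + v) ∧
    (∀ (γ : cayAdd (Fin n → ℤ) S ≃g cayAdd (Fin n → ℤ) S) (v : Fin n → ℤ),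
        ∃ w : Fin n → ℤ, ∀ x, γ (γ.symm x + v) = x + w) := by
  constructor
  · intro v
    exact ⟨CayNormal.transAuto v, fun x => rfl⟩
  · intro γ v
    refine ⟨γ (γ.symm 0 + v), ?_⟩
    intro x
    have h := CayNormal.rig_all hfin hsym hgen v γ
    have h1 := CayNormal.rig_all hfin hsym hgen v γ (γ.symm x)
    have h2 := CayNormal.rig_all hfin hsym hgen v γ (γ.symm 0)
    rw [RelIso.apply_symm_apply] at h1 h2
    rw [h1, h2]
    abel
end

section
/- For every n > 1 there exists kₙ such that every finite subgroup of GL(n, ℤ) has order less than kₙ; moreover, for square-free k ≥ kₙ, the subgroup of GL(n, ℤ) consisting of matrices whose (i,1) entries are divisible by k for all i ≥ 2 has index at least k in GL(n, ℤ). -/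
/-- The set of invertible integer matrices whose first-column entries below the top
entry are all divisible by `k` (a subgroup of GL(n, ℤ)). -/
def FirstColDiv (n k : ℕ) [NeZero n] (A : Matrix.GeneralLinearGroup (Fin n) ℤ) : Prop :=
  ∀ i : Fin n, i ≠ 0 → (k : ℤ) ∣ (A : Matrix (Fin n) (Fin n) ℤ) i 0

/-
Minkowski's argument: if `A ≡ 1 (mod 2^t)` with `t ≥ 2` and `A^p = 1` for a prime `p`, then
expanding `(1 + 2^t M)^p = 1` gives `p M ≡ 0 (mod 4)`, hence `A ≡ 1 (mod 2^(t+1))`; so a torsion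
element of `GL(n, ℤ)` that is trivial mod 4 is trivial, and reduction mod 4 embeds every finite
subgroup into the finite group `GL(n, ℤ/4)`. For the index, the transvections `E₂₁(a)`,
`0 ≤ a < k`, lie in pairwise distinct cosets, since `E₂₁(a)⁻¹ E₂₁(b) = E₂₁(b - a)`.
-/

theorem exists_one_add_pow_eq {R : Type*} [Semiring R] (x : R) (k : ℕ) :
    ∃ y, (1 + x) ^ k = 1 + k • x + x ^ 2 * y := by
  induction k with
  | zero => exact ⟨0, by simp⟩
  | succ k ih =>
    obtain ⟨y, hy⟩ := ih
    refine ⟨k • 1 + y + y * x, ?_⟩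
    rw [pow_succ, hy]
    simp only [add_mul, mul_add, succ_nsmul, smul_mul_assoc, mul_smul_comm, one_mul, mul_one,
      pow_two, mul_assoc]
    abel

theorem exists_eq_two_nsmul_of_prime_nsmul_eq_four_nsmul {G : Type*} [AddCommGroup G]
    [IsAddTorsionFree G] {p : ℕ} (hp : p.Prime) {x z : G} (h : p • x = 4 • z) :
    ∃ y, x = 2 • y := by
  rcases hp.eq_two_or_odd' with rfl | ⟨q, rfl⟩
  · refine ⟨z, nsmul_right_injective two_ne_zero ?_⟩
    show 2 • x = 2 • 2 • z
    rw [smul_smul]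
    exact h
  · refine ⟨2 • z - q • x, ?_⟩
    rw [smul_sub, smul_smul, smul_smul, show 2 * 2 = 4 from rfl, ← h, add_smul, one_smul]
    abel

theorem exists_sub_one_eq_two_pow_succ_nsmul {R : Type*} [Ring R] [IsAddTorsionFree R] {A : R}
    {p t : ℕ} (hp : p.Prime) (ht : 2 ≤ t) (hA : A ^ p = 1) (h : ∃ M, A - 1 = 2 ^ t • M) :
    ∃ M, A - 1 = 2 ^ (t + 1) • M := by
  obtain ⟨s, rfl⟩ := Nat.exists_eq_add_of_le' ht
  obtain ⟨M, hM⟩ := h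
  obtain ⟨Y, hY⟩ := exists_one_add_pow_eq (A - 1) p
  -- `hY` becomes `2^t • (p • M + 2^t • (M^2 * Y)) = 0`, and `t ≥ 2` makes `2^t` a multiple of 4
  rw [add_sub_cancel, hA, hM, smul_pow, smul_mul_assoc, smul_comm, sq (2 ^ _), mul_smul,
    add_assoc, ← smul_add, left_eq_add] at hY
  have hpM : p • M = 4 • (-(2 ^ s • (M ^ 2 * Y)) : R) := by
    rw [smul_neg, smul_smul, show 4 * 2 ^ s = 2 ^ (s + 2) by ring, eq_neg_iff_add_eq_zero]
    exact nsmul_right_injective (pow_ne_zero _ two_ne_zero) (hY.trans (smul_zero _).symm)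
  obtain ⟨y, rfl⟩ := exists_eq_two_nsmul_of_prime_nsmul_eq_four_nsmul hp hpM
  exact ⟨y, by rw [hM, smul_smul, ← pow_succ]⟩

theorem Matrix.eq_zero_of_forall_two_pow_nsmul {m n : Type*} {N : Matrix m n ℤ}
    (h : ∀ t : ℕ, ∃ M, N = 2 ^ t • M) : N = 0 := by
  ext i j
  by_contra hN
  obtain ⟨t, ht⟩ := Int.finiteMultiplicity_iff.mpr ⟨show (2 : ℤ).natAbs ≠ 1 by decide, hN⟩
  obtain ⟨M, hM⟩ := h (t + 1)
  exact ht ⟨M i j, by simp [hM]⟩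

open Matrix

theorem Matrix.eq_one_of_pow_prime_eq_one {n : Type*} [Fintype n] [DecidableEq n]
    {A : Matrix n n ℤ} {p : ℕ} (hp : p.Prime) (hA : A ^ p = 1) (h4 : ∃ M, A - 1 = 4 • M) :
    A = 1 := by
  have : IsAddTorsionFree (Matrix n n ℤ) :=
    Module.isTorsionFree_int_iff_isAddTorsionFree.mp inferInstance
  have h2pow : ∀ t, 2 ≤ t → ∃ M, A - 1 = 2 ^ t • M := fun t ht =>
    Nat.le_induction h4 (fun t ht ih => exists_sub_one_eq_two_pow_succ_nsmul hp ht hA ih) t ht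
  rw [← sub_eq_zero]
  refine eq_zero_of_forall_two_pow_nsmul fun t => ?_
  obtain ⟨M, hM⟩ := h2pow (t + 2) (by omega)
  exact ⟨4 • M, by rw [hM, smul_smul, pow_add]; rfl⟩

theorem Subgroup.eq_one_of_mem_of_isOfFinOrder {G : Type*} [Group G] {K : Subgroup G}
    (hK : ∀ g ∈ K, ∀ p : ℕ, p.Prime → g ^ p = 1 → g = 1) {g : G} (hg : g ∈ K)
    (hfin : IsOfFinOrder g) : g = 1 := by
  by_contra hne
  have hp : (orderOf g).minFac.Prime := Nat.minFac_prime (by rwa [Ne, orderOf_eq_one_iff])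
  have hord := orderOf_pow_orderOf_div hfin.orderOf_pos.ne' (Nat.minFac_dvd (orderOf g))
  have hpow : (g ^ (orderOf g / (orderOf g).minFac)) ^ (orderOf g).minFac = 1 := by
    rw [← pow_mul, Nat.div_mul_cancel (Nat.minFac_dvd _), pow_orderOf_eq_one]
  rw [hK _ (K.pow_mem hg _) _ hp hpow, orderOf_one] at hord
  exact hp.one_lt.ne hord

namespace Matrix.GeneralLinearGroup

variable {n : Type*} [Fintype n] [DecidableEq n]

theorem exists_sub_one_eq_nsmul_of_map_eq_one {d : ℕ} {g : GL n ℤ}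
    (hg : map (Int.castRingHom (ZMod d)) g = 1) :
    ∃ M : Matrix n n ℤ, (g : Matrix n n ℤ) - 1 = d • M := by
  have hdvd : ∀ i j, (d : ℤ) ∣ ((g : Matrix n n ℤ) - 1) i j := by
    intro i j
    rw [← ZMod.intCast_zmod_eq_zero_iff_dvd]
    have := congr_arg (fun x : GL n (ZMod d) => (x : Matrix n n (ZMod d)) i j) hg
    by_cases hij : i = j <;> simpa [hij, sub_eq_zero, Matrix.one_apply] using this
  choose M hM using hdvd
  exact ⟨Matrix.of M, by ext i j; simp [hM]⟩

theorem eq_one_of_pow_prime_eq_one {g : GL n ℤ} {p : ℕ} (hp : p.Prime) (hg : g ^ p = 1)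
    (h4 : map (Int.castRingHom (ZMod 4)) g = 1) : g = 1 :=
  Units.ext <| Matrix.eq_one_of_pow_prime_eq_one hp (by simpa using congr_arg Units.val hg)
    (exists_sub_one_eq_nsmul_of_map_eq_one h4)

theorem card_le_card_zmod_four (H : Subgroup (GL n ℤ)) [Finite H] :
    Nat.card H ≤ Nat.card (GL n (ZMod 4)) := by
  let φ := map (n := n) (Int.castRingHom (ZMod 4))
  refine Nat.card_le_card_of_injective _ ((injective_iff_map_eq_one (φ.comp H.subtype)).mpr ?_)
  intro x hx
  exact Subtype.ext <| Subgroup.eq_one_of_mem_of_isOfFinOrder (K := φ.ker)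
    (fun g hg p hp hgp => eq_one_of_pow_prime_eq_one hp hgp hg) hx
    (H.subtype.isOfFinOrder (isOfFinOrder_of_finite x))

variable {R : Type*} [CommRing R] {i j : n}

def transvection (hij : i ≠ j) (c : R) : GL n R where
  val := Matrix.transvection i j c
  inv := Matrix.transvection i j (-c)
  val_inv := by rw [transvection_mul_transvection_same _ _ hij, add_neg_cancel, transvection_zero]
  inv_val := by rw [transvection_mul_transvection_same _ _ hij, neg_add_cancel, transvection_zero]

theorem transvection_inv_mul (hij : i ≠ j) (c d : R) :
    (transvection hij c)⁻¹ * transvection hij d = transvection hij (d - c) :=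
  Units.ext <| (transvection_mul_transvection_same _ _ hij _ _).trans <|
    congrArg _ (neg_add_eq_sub c d)

theorem transvection_apply_same (hij : i ≠ j) (c : R) :
    (transvection hij c : Matrix n n R) i j = c := by
  simp [transvection, Matrix.transvection, hij]

end Matrix.GeneralLinearGroup

theorem exists_pairwise_not_firstColDiv {n : ℕ} [NeZero n] (hn : 1 < n) (k : ℕ) :
    ∃ f : Fin k → GL (Fin n) ℤ, ∀ a b, a ≠ b → ¬FirstColDiv n k ((f a)⁻¹ * f b) := by
  have h10 : (⟨1, hn⟩ : Fin n) ≠ 0 := by simp [Fin.ext_iff]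
  refine ⟨fun a => GeneralLinearGroup.transvection h10 (a : ℤ), fun a b hab hdiv => hab ?_⟩
  have hk := hdiv _ h10
  rw [GeneralLinearGroup.transvection_inv_mul, GeneralLinearGroup.transvection_apply_same] at hk
  exact Fin.ext (Nat.ModEq.eq_of_lt_of_lt (Nat.modEq_iff_dvd.mpr hk) a.2 b.2)

/-- For n > 1 there is kₙ bounding the order of every finite subgroup of GL(n, ℤ);
moreover for square-free k ≥ kₙ the subgroup of matrices whose (i,1) entries (i ≥ 2)
are divisible by k has index at least k in GL(n, ℤ): there are k elements lying in
pairwise distinct left cosets of it. -/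
theorem stmt_17 (n : ℕ) [NeZero n] (hn : 1 < n) :
    ∃ kn : ℕ,
      (∀ H : Subgroup (Matrix.GeneralLinearGroup (Fin n) ℤ), Finite H → Nat.card H < kn) ∧
      ∀ k : ℕ, kn ≤ k → Squarefree k →
        ∃ f : Fin k → Matrix.GeneralLinearGroup (Fin n) ℤ,
          ∀ i j, i ≠ j → ¬ FirstColDiv n k ((f i)⁻¹ * f j) :=
  ⟨Nat.card (GL (Fin n) (ZMod 4)) + 1,
    fun H _ => Nat.lt_succ_of_le (GeneralLinearGroup.card_le_card_zmod_four H),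
    fun k _ _ => exists_pairwise_not_firstColDiv hn k⟩
end

section
/- In GL(2, ℤ), the subgroup of matrices [[a, b],[c, d]] with c even (and determinant ±1) has index 3, and the matrix [[0, −1],[1, −1]] generates a subgroup of order 3 modulo {±I} intersecting it trivially; consequently GL(2, ℤ) is the product of this subgroup with the cyclic subgroup generated by [[0, −1],[1, −1]] and −I. -/
/-!
`CEven A` only depends on the reduction of `A` modulo 2, where it says that the image lies in
the upper triangular subgroup of order 2 of `GL(2, ℤ/2) ≅ S₃`, while `M3` reduces to an element
of order 3. Both coset decompositions are therefore a finite check in `GL(2, ℤ/2)`, which lifts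
to `GL(2, ℤ)` along the reduction map.
-/

/-- The subgroup (as a predicate) of GL(2, ℤ) of matrices [[a,b],[c,d]] with c even. -/
def CEven (A : Matrix.GeneralLinearGroup (Fin 2) ℤ) : Prop :=
  (2 : ℤ) ∣ (A : Matrix (Fin 2) (Fin 2) ℤ) 1 0

/-- The matrix [[0, −1], [1, −1]] as an element of GL(2, ℤ); its inverse is
[[−1, 1], [−1, 0]]. -/
def M3 : Matrix.GeneralLinearGroup (Fin 2) ℤ :=
  ⟨!![0, -1; 1, -1], !![-1, 1; -1, 0], by decide, by decide⟩

open Matrix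

instance : DecidablePred CEven := fun _ => inferInstanceAs (Decidable (2 ∣ _))

abbrev modTwo : GL (Fin 2) ℤ →* GL (Fin 2) (ZMod 2) :=
  GeneralLinearGroup.map (Int.castRingHom (ZMod 2))

theorem cEven_iff_modTwo (A : GL (Fin 2) ℤ) :
    CEven A ↔ (modTwo A : Matrix (Fin 2) (Fin 2) (ZMod 2)) 1 0 = 0 := by
  simp [CEven, ZMod.intCast_zmod_eq_zero_iff_dvd]

theorem exists_modTwo_inv_pow_mul (g : GL (Fin 2) (ZMod 2)) :
    ∃ i : Fin 3, (((modTwo M3 ^ (i : ℕ))⁻¹ * g : GL (Fin 2) (ZMod 2)) :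
      Matrix (Fin 2) (Fin 2) (ZMod 2)) 1 0 = 0 := by
  revert g
  decide

theorem exists_modTwo_mul_inv_pow (g : GL (Fin 2) (ZMod 2)) :
    ∃ j : Fin 3, ((g * (modTwo M3 ^ (j : ℕ))⁻¹ : GL (Fin 2) (ZMod 2)) :
      Matrix (Fin 2) (Fin 2) (ZMod 2)) 1 0 = 0 := by
  revert g
  decide

theorem exists_cEven_inv_pow_mul (A : GL (Fin 2) ℤ) :
    ∃ i : Fin 3, CEven ((M3 ^ (i : ℕ))⁻¹ * A) := by
  obtain ⟨i, hi⟩ := exists_modTwo_inv_pow_mul (modTwo A)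
  exact ⟨i, by rwa [cEven_iff_modTwo, map_mul, map_inv, map_pow]⟩

theorem exists_cEven_mul_inv_pow (A : GL (Fin 2) ℤ) :
    ∃ j : Fin 3, CEven (A * (M3 ^ (j : ℕ))⁻¹) := by
  obtain ⟨j, hj⟩ := exists_modTwo_mul_inv_pow (modTwo A)
  exact ⟨j, by rwa [cEven_iff_modTwo, map_mul, map_inv, map_pow]⟩

theorem orderOf_M3 : orderOf M3 = 3 :=
  orderOf_eq_prime (by decide) (by decide)

/-- In GL(2, ℤ): the subgroup of matrices with c even has index 3 (there are exactly 3
left cosets); M = [[0,−1],[1,−1]] has order 3 and generates a subgroup intersecting it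
trivially modulo ±I; and GL(2, ℤ) is the product of the two subgroups. -/
theorem stmt_19 :
    (∃ f : Fin 3 → Matrix.GeneralLinearGroup (Fin 2) ℤ,
        (∀ i j, i ≠ j → ¬ CEven ((f i)⁻¹ * f j)) ∧
        (∀ A : Matrix.GeneralLinearGroup (Fin 2) ℤ, ∃ i, CEven ((f i)⁻¹ * A))) ∧
    orderOf M3 = 3 ∧
    (¬ CEven M3 ∧ ¬ CEven (M3 ^ 2) ∧ ¬ CEven (-M3) ∧ ¬ CEven (-(M3 ^ 2))) ∧
    (∀ A : Matrix.GeneralLinearGroup (Fin 2) ℤ,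
        ∃ B : Matrix.GeneralLinearGroup (Fin 2) ℤ, CEven B ∧
          ∃ j : Fin 3, A = B * M3 ^ (j : ℕ) ∨ A = -(B * M3 ^ (j : ℕ))) := by
  refine ⟨⟨fun i => M3 ^ (i : ℕ), by decide, exists_cEven_inv_pow_mul⟩, orderOf_M3, by decide,
    fun A => ?_⟩
  obtain ⟨j, hj⟩ := exists_cEven_mul_inv_pow A
  exact ⟨_, hj, j, Or.inl (inv_mul_cancel_right A _).symm⟩
end
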